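/- If q² is a primitive l-th root of unity with l > 1, then A(α,β,γ) is a finitely generated module over the central subalgebra K[x^l, y^l, z^l], hence A(α,β,γ) satisfies a polynomial identity. -/

import Mathlib

noncomputable section

open FreeAlgebra

/-- The defining relations of the 3-cyclic quantum Weyl algebra `A(α,β,γ)`:
`xy = q²yx + α`, `xz = q⁻²zx + β`, `yz = q²zy + γ`. -/
inductive CQWRel (K : Type) [Field K] (q α β γ : K) :
    FreeAlgebra K (Fin 3) → FreeAlgebra K (Fin 3) → Prop
  | xy : CQWRel K q α β γ (ι K (0 : Fin 3) * ι K 1)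
      (q ^ 2 • (ι K (1 : Fin 3) * ι K 0) + algebraMap K _ α)
  | xz : CQWRel K q α β γ (ι K (0 : Fin 3) * ι K 2)
      (q⁻¹ ^ 2 • (ι K (2 : Fin 3) * ι K 0) + algebraMap K _ β)
  | yz : CQWRel K q α β γ (ι K (1 : Fin 3) * ι K 2)
      (q ^ 2 • (ι K (2 : Fin 3) * ι K 1) + algebraMap K _ γ)

/-- The 3-cyclic quantum Weyl algebra `A(α,β,γ)`. -/
abbrev CQW (K : Type) [Field K] (q α β γ : K) := RingQuot (CQWRel K q α β γ)

variable {K : Type} [Field K]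

/-- The generator `x` of `A(α,β,γ)`. -/
def Xg (q α β γ : K) : CQW K q α β γ := RingQuot.mkAlgHom K (CQWRel K q α β γ) (ι K 0)

/-- The generator `y` of `A(α,β,γ)`. -/
def Yg (q α β γ : K) : CQW K q α β γ := RingQuot.mkAlgHom K (CQWRel K q α β γ) (ι K 1)

/-- The generator `z` of `A(α,β,γ)`. -/
def Zg (q α β γ : K) : CQW K q α β γ := RingQuot.mkAlgHom K (CQWRel K q α β γ) (ι K 2)

/-!
From `xy = q²yx + α` one gets `xⁿy = q²ⁿyxⁿ + (1 + q² + ⋯ + q²⁽ⁿ⁻¹⁾)αxⁿ⁻¹`; for `n = l` the twist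
`q²ˡ = 1` and the geometric sum both vanish, so `xˡ` commutes with `y`. In this way `xˡ, yˡ, zˡ`
are central. The same expansions give `K[a]K[b] ⊆ K[b]K[a]` for each defining relation
`ab = s·ba + t`, hence `A = K[z]K[y]K[x]`, and reducing exponents modulo `l` shows that the `l³`
monomials `zᶜyᵇxᵃ` with `a, b, c < l` span `A` over `K[xˡ, yˡ, zˡ]`. Finally, an algebra spanned by
`m` elements over a central subring satisfies the standard identity of degree `m + 1`: the
standard polynomial is multilinear over the centre and alternating.
-/

open Submodule
open Algebra (adjoin)
open Subalgebra (toSubmodule)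

theorem AlternatingMap.map_eq_zero_of_card_lt_of_span_eq_top {R M N ι J : Type*}
    [CommSemiring R] [AddCommMonoid M] [Module R M] [AddCommMonoid N] [Module R N]
    [Fintype ι] [Fintype J] (f : M [⋀^ι]→ₗ[R] N) {w : J → M}
    (hw : span R (Set.range w) = ⊤) (hcard : Fintype.card J < Fintype.card ι) (v : ι → M) :
    f v = 0 := by
  classical
  have hv (i : ι) : v i ∈ span R (Set.range w) := hw ▸ mem_top
  choose c hc using fun i => (mem_span_range_iff_exists_fun R).1 (hv i)
  obtain rfl : (fun i => ∑ j, c i j • w j) = v := funext hc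
  rw [← f.coe_multilinearMap, MultilinearMap.map_sum]
  refine Finset.sum_eq_zero fun r _ => ?_
  obtain ⟨i, j, hij, hr⟩ := Fintype.exists_ne_map_eq_of_card_lt r hcard
  rw [MultilinearMap.map_smul_univ, f.coe_multilinearMap,
    f.map_eq_zero_of_eq _ (congrArg w hr) hij, smul_zero]

section StandardIdentity

open Equiv

variable {R A : Type*} [CommSemiring R] [Ring A] [Algebra R A]

theorem sum_sign_smul_ofFn_prod_eq_zero_of_span_eq_top {J : Type*} [Fintype J] {w : J → A}
    (hw : span R (Set.range w) = ⊤) {n : ℕ} (hn : Fintype.card J < n) (v : Fin n → A) :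
    ∑ σ : Perm (Fin n), (Perm.sign σ : ℤ) • (List.ofFn fun i => v (σ i)).prod = 0 := by
  have := (MultilinearMap.alternatization (MultilinearMap.mkPiAlgebraFin R n A)
    ).map_eq_zero_of_card_lt_of_span_eq_top hw (by simpa using hn) v
  simpa [MultilinearMap.alternatization_apply, Units.smul_def] using this

variable (R A) in
theorem exists_sum_sign_smul_ofFn_prod_eq_zero [Module.Finite R A] :
    ∃ n : ℕ, 0 < n ∧ ∀ v : Fin n → A,
      ∑ σ : Perm (Fin n), (Perm.sign σ : ℤ) • (List.ofFn fun i => v (σ i)).prod = 0 := by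
  obtain ⟨m, w, hw⟩ := Module.Finite.exists_fin (R := R) (M := A)
  exact ⟨m + 1, m.succ_pos, sum_sign_smul_ofFn_prod_eq_zero_of_span_eq_top hw (by simp)⟩

end StandardIdentity

namespace Subalgebra

variable {R A : Type*} [CommSemiring R]

theorem finite_subringCenter_of_le_center [Ring A] [Algebra R A] (S : Subalgebra R A)
    (hS : S ≤ center R A) [Module.Finite S A] : Module.Finite (Subring.center A) A := by
  obtain ⟨m, w, hw⟩ := Module.Finite.exists_fin (R := S) (M := A)
  refine ⟨Submodule.fg_def.2 ⟨_, Set.finite_range w, eq_top_iff.2 ?_⟩⟩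
  rintro a -
  have ha : a ∈ span S (Set.range w) := hw ▸ mem_top
  induction ha using span_induction with
  | mem u hu => exact subset_span hu
  | zero => exact zero_mem _
  | add u v _ _ hu hv => exact add_mem hu hv
  | smul s u _ hu =>
    have hs : (s : A) ∈ Subring.center A :=
      Subring.mem_center_iff.2 (mem_center_iff.1 (hS s.2))
    exact Submodule.smul_mem _ (⟨s, hs⟩ : Subring.center A) hu

theorem mem_center_of_adjoin_eq_top [Semiring A] [Algebra R A] {s : Set A}
    (hs : adjoin R s = ⊤) {c : A} (hc : ∀ g ∈ s, Commute g c) : c ∈ center R A := by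
  have hle : adjoin R s ≤ centralizer R {c} :=
    Algebra.adjoin_le fun g hg => (mem_centralizer_iff R).2 fun _ h => h ▸ (hc g hg).symm.eq
  exact mem_center_iff.2 fun b =>
    ((mem_centralizer_iff R).1 (hle (hs ▸ Algebra.mem_top : b ∈ adjoin R s)) c rfl).symm

end Subalgebra

theorem Submodule.mul_toSubmodule_adjoin_le {R A : Type*} [CommSemiring R] [Semiring A]
    [Algebra R A] {N : Submodule R A} {s : Set A} (h : ∀ u ∈ N, ∀ g ∈ s, u * g ∈ N) :
    N * toSubmodule (adjoin R s) ≤ N := by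
  refine mul_le.2 fun u hu p hp => ?_
  induction hp using Algebra.adjoin_induction generalizing u with
  | mem g hg => exact h u hu g hg
  | algebraMap r => rw [← Algebra.commutes, ← Algebra.smul_def]; exact N.smul_mem r hu
  | add p p' _ _ hp hp' => rw [mul_add]; exact add_mem (hp u hu) (hp' u hu)
  | mul p p' _ _ hp hp' => rw [← mul_assoc]; exact hp' _ (hp u hu)

theorem pow_mul_pow_mul_pow_mem_span {R A : Type*} [CommSemiring R] [Semiring A] [Algebra R A]
    {S : Subalgebra R A} {x y z : A} {l : ℕ} (hl : 0 < l) (hS : S ≤ Subalgebra.center R A)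
    (hx : x ^ l ∈ S) (hy : y ^ l ∈ S) (hz : z ^ l ∈ S) (c b a : ℕ) :
    z ^ c * y ^ b * x ^ a ∈ span S (Set.range fun i : Fin l × Fin l × Fin l =>
      z ^ (i.1 : ℕ) * y ^ (i.2.1 : ℕ) * x ^ (i.2.2 : ℕ)) := by
  have hdiv (g : A) (n : ℕ) : g ^ n = (g ^ l) ^ (n / l) * g ^ (n % l) := by
    rw [← pow_mul, ← pow_add, Nat.div_add_mod]
  have hcomm {w : A} (hw : w ∈ S) (u : A) : Commute u w := Subalgebra.mem_center_iff.1 (hS hw) u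
  have hZ := pow_mem hz (c / l)
  have hY := pow_mem hy (b / l)
  have hX := pow_mem hx (a / l)
  set gen : Fin l × Fin l × Fin l → A := fun i =>
    z ^ (i.1 : ℕ) * y ^ (i.2.1 : ℕ) * x ^ (i.2.2 : ℕ)
  convert (span S (Set.range gen)).smul_mem (⟨_, mul_mem (mul_mem hZ hY) hX⟩ : S)
    (subset_span ⟨(⟨c % l, c.mod_lt hl⟩, ⟨b % l, b.mod_lt hl⟩, ⟨a % l, a.mod_lt hl⟩), rfl⟩)
    using 1
  rw [Subalgebra.smul_def, smul_eq_mul, hdiv z c, hdiv y b, hdiv x a]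
  simp only [gen, mul_assoc]
  rw [(hcomm hY _).left_comm, (hcomm hX _).left_comm, (hcomm hX _).left_comm]

section QuantumCommutation

variable {R A : Type*} [CommRing R] [Ring A] [Algebra R A] {a b : A} {s t : R}

theorem pow_succ_mul_of_mul_eq (h : a * b = s • (b * a) + algebraMap R A t) (n : ℕ) :
    a ^ (n + 1) * b =
      s ^ (n + 1) • (b * a ^ (n + 1)) + ((∑ k ∈ Finset.range (n + 1), s ^ k) * t) • a ^ n := by
  induction n with
  | zero => simpa [Algebra.algebraMap_eq_smul_one] using h
  | succ n ih =>
    rw [pow_succ', mul_assoc, ih, mul_add, mul_smul_comm, mul_smul_comm, ← mul_assoc, h]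
    simp only [add_mul, smul_mul_assoc, Algebra.algebraMap_eq_smul_one, one_mul, mul_assoc,
      ← pow_succ']
    match_scalars
    · ring
    · simp only [Finset.sum_range_succ]; ring

theorem commute_pow_left_of_mul_eq (h : a * b = s • (b * a) + algebraMap R A t) {l : ℕ}
    (hl : ∑ k ∈ Finset.range l, s ^ k = 0) : Commute (a ^ l) b := by
  obtain _ | n := l
  · simp
  have hs : s ^ (n + 1) = 1 := by
    rw [← sub_eq_zero, ← geom_sum_mul, hl, zero_mul]
  rw [Commute, SemiconjBy, pow_succ_mul_of_mul_eq h, hs, hl, one_smul, zero_mul, zero_smul,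
    add_zero]

theorem commute_pow_right_of_mul_eq (h : a * b = s • (b * a) + algebraMap R A t) {l : ℕ}
    (hl : ∑ k ∈ Finset.range l, s ^ k = 0) : Commute a (b ^ l) := by
  have hop : MulOpposite.op b * MulOpposite.op a =
      s • (MulOpposite.op a * MulOpposite.op b) + algebraMap R Aᵐᵒᵖ t := by
    apply MulOpposite.unop_injective
    simpa using h
  simpa using (commute_pow_left_of_mul_eq hop hl).unop.symm

theorem pow_mul_mem_adjoin_mul_adjoin (h : a * b = s • (b * a) + algebraMap R A t) (n : ℕ) :
    a ^ n * b ∈ toSubmodule (adjoin R {b}) * toSubmodule (adjoin R {a}) := by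
  have hb : b ∈ toSubmodule (adjoin R {b}) := Algebra.self_mem_adjoin_singleton R b
  have hb₀ : 1 ∈ toSubmodule (adjoin R {b}) := one_mem (adjoin R {b})
  have ha (m : ℕ) : a ^ m ∈ toSubmodule (adjoin R {a}) :=
    pow_mem (Algebra.self_mem_adjoin_singleton R a) m
  obtain _ | n := n
  · simpa using mul_mem_mul hb (ha 0)
  rw [pow_succ_mul_of_mul_eq h]
  refine add_mem (smul_mem _ _ (mul_mem_mul hb (ha _))) (smul_mem _ _ ?_)
  simpa using mul_mem_mul hb₀ (ha n)

theorem toSubmodule_adjoin_mul_toSubmodule_adjoin_le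
    (h : a * b = s • (b * a) + algebraMap R A t) :
    toSubmodule (adjoin R {a}) * toSubmodule (adjoin R {b}) ≤
      toSubmodule (adjoin R {b}) * toSubmodule (adjoin R {a}) := by
  set Ka := toSubmodule (adjoin R {a})
  set Kb := toSubmodule (adjoin R {b})
  have hKa : Ka ≤ Kb * Ka := by
    simpa using mul_le_mul_left (one_le.2 (one_mem (adjoin R {b}))) Ka
  have hKab : Ka * span R {b} ≤ Kb * Ka := by
    conv_lhs => rw [show Ka = span R (Submonoid.closure {a}) from Algebra.adjoin_eq_span R {a}]
    rw [span_mul_span, span_le]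
    rintro _ ⟨_, hu, _, rfl, rfl⟩
    obtain ⟨n, rfl⟩ := Submonoid.mem_closure_singleton.1 hu
    exact pow_mul_mem_adjoin_mul_adjoin h n
  have hclosed : Kb * Ka * span R {b} ≤ Kb * Ka := calc
    Kb * Ka * span R {b} ≤ Kb * (Kb * Ka) := by rw [mul_assoc]; exact mul_le_mul_right hKab Kb
    _ = Kb * Ka := by rw [← mul_assoc, (Subalgebra.isIdempotentElem_toSubmodule _).eq]
  calc Ka * Kb ≤ Kb * Ka * Kb := mul_le_mul_left hKa Kb
    _ ≤ Kb * Ka := mul_toSubmodule_adjoin_le <| by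
      rintro u hu _ rfl
      exact hclosed (mul_mem_mul hu (mem_span_singleton_self _))

end QuantumCommutation

section CyclicQuantumWeyl

variable (q α β γ : K) {l : ℕ}

theorem Xg_mul_Yg : Xg q α β γ * Yg q α β γ =
    q ^ 2 • (Yg q α β γ * Xg q α β γ) + algebraMap K _ α := by
  simpa [Xg, Yg] using RingQuot.mkAlgHom_rel K (CQWRel.xy (q := q) (α := α) (β := β) (γ := γ))

theorem Xg_mul_Zg : Xg q α β γ * Zg q α β γ =
    (q ^ 2)⁻¹ • (Zg q α β γ * Xg q α β γ) + algebraMap K _ β := by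
  simpa [Xg, Zg] using RingQuot.mkAlgHom_rel K (CQWRel.xz (q := q) (α := α) (β := β) (γ := γ))

theorem Yg_mul_Zg : Yg q α β γ * Zg q α β γ =
    q ^ 2 • (Zg q α β γ * Yg q α β γ) + algebraMap K _ γ := by
  simpa [Yg, Zg] using RingQuot.mkAlgHom_rel K (CQWRel.yz (q := q) (α := α) (β := β) (γ := γ))

theorem adjoin_Xg_Yg_Zg : adjoin K {Xg q α β γ, Yg q α β γ, Zg q α β γ} = ⊤ := by
  have h := congrArg (Subalgebra.map (RingQuot.mkAlgHom K (CQWRel K q α β γ)))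
    (FreeAlgebra.adjoin_range_ι K (Fin 3))
  rw [← Algebra.adjoin_image, Algebra.map_top,
    (AlgHom.range_eq_top _).2 (RingQuot.mkAlgHom_surjective K _)] at h
  convert h using 2
  ext u
  simp [Fin.exists_fin_succ, Xg, Yg, Zg, eq_comm]

theorem toSubmodule_adjoin_Zg_mul_Yg_mul_Xg_eq_top :
    toSubmodule (adjoin K {Zg q α β γ}) * toSubmodule (adjoin K {Yg q α β γ}) *
      toSubmodule (adjoin K {Xg q α β γ}) = ⊤ := by
  set Kx := toSubmodule (adjoin K {Xg q α β γ})
  set Ky := toSubmodule (adjoin K {Yg q α β γ})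
  set Kz := toSubmodule (adjoin K {Zg q α β γ})
  have hxy : Kx * Ky ≤ Ky * Kx := toSubmodule_adjoin_mul_toSubmodule_adjoin_le (Xg_mul_Yg ..)
  have hxz : Kx * Kz ≤ Kz * Kx := toSubmodule_adjoin_mul_toSubmodule_adjoin_le (Xg_mul_Zg ..)
  have hyz : Ky * Kz ≤ Kz * Ky := toSubmodule_adjoin_mul_toSubmodule_adjoin_le (Yg_mul_Zg ..)
  have hidem (g : CQW K q α β γ) := (Subalgebra.isIdempotentElem_toSubmodule (adjoin K {g})).eq
  have hx : Kz * Ky * Kx * Kx ≤ Kz * Ky * Kx := by rw [mul_assoc _ Kx, hidem]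
  have hy : Kz * Ky * Kx * Ky ≤ Kz * Ky * Kx := calc
    Kz * Ky * Kx * Ky = Kz * Ky * (Kx * Ky) := mul_assoc ..
    _ ≤ Kz * Ky * (Ky * Kx) := by gcongr
    _ = Kz * Ky * Kx := by rw [← mul_assoc, mul_assoc Kz, hidem]
  have hz : Kz * Ky * Kx * Kz ≤ Kz * Ky * Kx := calc
    Kz * Ky * Kx * Kz = Kz * Ky * (Kx * Kz) := mul_assoc ..
    _ ≤ Kz * Ky * (Kz * Kx) := by gcongr
    _ = Kz * (Ky * Kz) * Kx := by simp only [mul_assoc]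
    _ ≤ Kz * (Kz * Ky) * Kx := by gcongr
    _ = Kz * Ky * Kx := by rw [← mul_assoc Kz Kz, hidem]
  have hgen : ∀ u ∈ Kz * Ky * Kx, ∀ g ∈ ({Xg q α β γ, Yg q α β γ, Zg q α β γ} : Set _),
      u * g ∈ Kz * Ky * Kx := by
    rintro u hu _ (rfl | rfl | rfl)
    · exact hx (mul_mem_mul hu (Algebra.self_mem_adjoin_singleton K _))
    · exact hy (mul_mem_mul hu (Algebra.self_mem_adjoin_singleton K _))
    · exact hz (mul_mem_mul hu (Algebra.self_mem_adjoin_singleton K _))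
  have hone_mem (g : CQW K q α β γ) : 1 ∈ toSubmodule (adjoin K {g}) :=
    one_mem (adjoin K {g})
  have hone : (1 : CQW K q α β γ) ∈ Kz * Ky * Kx := by
    simpa using mul_mem_mul (mul_mem_mul (hone_mem _) (hone_mem _)) (hone_mem _)
  refine eq_top_iff.2 (le_trans ?_ (mul_toSubmodule_adjoin_le hgen))
  rw [adjoin_Xg_Yg_Zg, Algebra.top_toSubmodule]
  simpa using mul_le_mul_left (one_le.2 hone) ⊤

theorem adjoin_pow_le_center (hl : 1 < l) (hq : IsPrimitiveRoot (q ^ 2) l) :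
    adjoin K {Xg q α β γ ^ l, Yg q α β γ ^ l, Zg q α β γ ^ l} ≤
      Subalgebra.center K (CQW K q α β γ) := by
  have hs : ∑ k ∈ Finset.range l, (q ^ 2) ^ k = 0 := hq.geom_sum_eq_zero hl
  have hs' : ∑ k ∈ Finset.range l, ((q ^ 2)⁻¹) ^ k = 0 := hq.inv.geom_sum_eq_zero hl
  have hxy := Xg_mul_Yg q α β γ
  have hxz := Xg_mul_Zg q α β γ
  have hyz := Yg_mul_Zg q α β γ
  refine Algebra.adjoin_le ?_
  rintro _ (rfl | rfl | rfl) <;>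
    refine Subalgebra.mem_center_of_adjoin_eq_top (adjoin_Xg_Yg_Zg q α β γ) ?_ <;>
    rintro _ (rfl | rfl | rfl)
  · exact (Commute.refl _).pow_right l
  · exact (commute_pow_left_of_mul_eq hxy hs).symm
  · exact (commute_pow_left_of_mul_eq hxz hs').symm
  · exact commute_pow_right_of_mul_eq hxy hs
  · exact (Commute.refl _).pow_right l
  · exact (commute_pow_left_of_mul_eq hyz hs).symm
  · exact commute_pow_right_of_mul_eq hxz hs'
  · exact commute_pow_right_of_mul_eq hyz hs
  · exact (Commute.refl _).pow_right l

open scoped Pointwise in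
theorem finite_adjoin_pow (hl : 0 < l)
    (hS : adjoin K {Xg q α β γ ^ l, Yg q α β γ ^ l, Zg q α β γ ^ l} ≤
      Subalgebra.center K (CQW K q α β γ)) :
    Module.Finite (adjoin K {Xg q α β γ ^ l, Yg q α β γ ^ l, Zg q α β γ ^ l})
      (CQW K q α β γ) := by
  set S := adjoin K {Xg q α β γ ^ l, Yg q α β γ ^ l, Zg q α β γ ^ l}
  set P : CQW K q α β γ → Set (CQW K q α β γ) := fun g => Submonoid.closure {g}
  have hspan : span K (P (Zg q α β γ) * P (Yg q α β γ) * P (Xg q α β γ)) ≤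
      (span S (Set.range fun i : Fin l × Fin l × Fin l =>
        Zg q α β γ ^ (i.1 : ℕ) * Yg q α β γ ^ (i.2.1 : ℕ) * Xg q α β γ ^ (i.2.2 : ℕ))
      ).restrictScalars K := by
    rw [span_le]
    rintro _ ⟨_, ⟨_, hz, _, hy, rfl⟩, _, hx, rfl⟩
    obtain ⟨c, rfl⟩ := Submonoid.mem_closure_singleton.1 hz
    obtain ⟨b, rfl⟩ := Submonoid.mem_closure_singleton.1 hy
    obtain ⟨a, rfl⟩ := Submonoid.mem_closure_singleton.1 hx
    exact pow_mul_pow_mul_pow_mem_span hl hS (Algebra.subset_adjoin (by simp))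
      (Algebra.subset_adjoin (by simp)) (Algebra.subset_adjoin (by simp)) c b a
  refine ⟨Submodule.fg_def.2 ⟨_, Set.finite_range _, eq_top_iff.2 fun u _ => hspan ?_⟩⟩
  rw [← span_mul_span, ← span_mul_span, ← Algebra.adjoin_eq_span, ← Algebra.adjoin_eq_span,
    ← Algebra.adjoin_eq_span, toSubmodule_adjoin_Zg_mul_Yg_mul_Xg_eq_top]
  exact mem_top

end CyclicQuantumWeyl

/-- If `q²` is a primitive `l`-th root of unity (`l > 1`), then `A(α,β,γ)` is a finitely
generated module over the central subalgebra `K[x^l, y^l, z^l]`; hence it satisfies a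
(monic) polynomial identity, e.g. a standard identity. -/
theorem stmt10 (q α β γ : K) (l : ℕ) (hl : 1 < l) (hq : IsPrimitiveRoot (q ^ 2) l) :
    Algebra.adjoin K ({Xg q α β γ ^ l, Yg q α β γ ^ l, Zg q α β γ ^ l} :
        Set (CQW K q α β γ)) ≤ Subalgebra.center K (CQW K q α β γ) ∧
    Module.Finite
      (Algebra.adjoin K ({Xg q α β γ ^ l, Yg q α β γ ^ l, Zg q α β γ ^ l} :
        Set (CQW K q α β γ)))
      (CQW K q α β γ) ∧
    ∃ n : ℕ, 0 < n ∧ ∀ v : Fin n → CQW K q α β γ,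
      ∑ σ : Equiv.Perm (Fin n),
        (Equiv.Perm.sign σ : ℤ) • (List.ofFn fun i => v (σ i)).prod = 0 := by
  have hcentral := adjoin_pow_le_center q α β γ hl hq
  have hfinite := finite_adjoin_pow q α β γ (by omega) hcentral
  have := Subalgebra.finite_subringCenter_of_le_center _ hcentral
  exact ⟨hcentral, hfinite,
    exists_sum_sign_smul_ofFn_prod_eq_zero (Subring.center (CQW K q α β γ)) _⟩
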